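/- Fix an integer d ≥ 1 and let β > 1/2. There exists a constant C > 0 depending only on β such that: if A, B : E × E → ℂ are infinite matrices with |A|_β < ∞ and |B|_{β+} < ∞, then the products AB and BA, defined by (AB)_a^c = Σ_{b∈E} A_a^b B_b^c and (BA)_a^c = Σ_{b∈E} B_a^b A_b^c (these series converge absolutely), satisfy |AB|_β ≤ C·|A|_β·|B|_{β+} and |BA|_β ≤ C·|A|_β·|B|_{β+}. -/

import Mathlib

/-!
The block `(AB)_{[j]}^{[j']}` is the sum, convergent in operator norm, of the products
`A_{[j]}^{[n]} B_{[n]}^{[j']}`, so its norm is at most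
`|A|_β |B|_{β+} (1 + ln j)^{-β} (1 + ln j')^{-β} ∑ₙ (1 + ln n)^{-2β} (1 + |n - j'|)^{-1}`.
For `2β > 1` this last sum is bounded uniformly in `j'`: away from the window `j'/2 < n < 2j'` it
is dominated by the Bertrand series `∑ 1 / (n (1 + ln n)^{2β})`, and inside the window
`1 + ln n` is comparable to `1 + ln j'` while `∑ 1 / (1 + |n - j'|)` is `O(1 + ln j')`.
Absolute convergence of the entries of `AB` follows from Cauchy–Schwarz, since every row and
column of a block has `ℓ²` norm at most the operator norm of the block. The same argument
applies to `BA`.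
-/

open scoped Classical

/-- `hermiteDim d j` is the number of `d`-tuples of odd natural numbers summing to `j`,
i.e. the multiplicity `d_j` of the eigenvalue `j` of the `d`-dimensional harmonic oscillator. -/
noncomputable def hermiteDim (d j : ℕ) : ℕ :=
  ((Finset.univ : Finset (Fin d → Fin (j + 1))).filter
    (fun f => (∀ i, Odd ((f i : ℕ))) ∧ ∑ i, ((f i : ℕ)) = j)).card

/-- The index set `E = {(j, l) : j ∈ Ê, 1 ≤ l ≤ d_j}`, encoded as pairs `⟨k, l⟩` where
`j = d + 2k` runs over `Ê = {d, d+2, …}` and `l` runs over a set of cardinality `d_j`. -/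
abbrev IndexE (d : ℕ) : Type := Σ k : ℕ, Fin (hermiteDim d (d + 2 * k))

/-- The eigenvalue `w_a` attached to `a ∈ E`. -/
def wE (d : ℕ) (a : IndexE d) : ℕ := d + 2 * a.1

/-- The operator norm of the block `A_{[j]}^{[j']}`, `j = d + 2k`, `j' = d + 2k'`, of an
infinite matrix `A : E × E → ℂ`, as a linear map between the corresponding Euclidean spaces. -/
noncomputable def blockNorm (d : ℕ) (A : IndexE d → IndexE d → ℂ) (k k' : ℕ) : ℝ :=
  ‖LinearMap.toContinuousLinearMap (Matrix.toEuclideanLin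
      (Matrix.of fun (i : Fin (hermiteDim d (d + 2 * k)))
        (i' : Fin (hermiteDim d (d + 2 * k'))) => A ⟨k, i⟩ ⟨k', i'⟩))‖

/-- The weight `(1 + ln j)^β (1 + ln j')^β` with `j = d + 2k`, `j' = d + 2k'`. -/
noncomputable def wtBeta (d : ℕ) (β : ℝ) (k k' : ℕ) : ℝ :=
  (1 + Real.log ((d : ℝ) + 2 * k)) ^ β * (1 + Real.log ((d : ℝ) + 2 * k')) ^ β

/-- The weight `(1 + |j - j'|)(1 + ln j)^β (1 + ln j')^β` with `j = d + 2k`, `j' = d + 2k'`. -/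
noncomputable def wtBetaPlus (d : ℕ) (β : ℝ) (k k' : ℕ) : ℝ :=
  (1 + |((d : ℝ) + 2 * k) - ((d : ℝ) + 2 * k')|) * wtBeta d β k k'

open scoped Matrix.Norms.L2Operator

namespace Matrix
variable {𝕜 : Type*} [RCLike 𝕜] {l m n : Type*} [Fintype l] [Fintype m] [Fintype n]

theorem sqrt_sum_sq_norm_col_le_l2_opNorm [DecidableEq n] (A : Matrix m n 𝕜) (j : n) :
    √(∑ i, ‖A i j‖ ^ 2) ≤ ‖A‖ := by
  have h := A.l2_opNorm_mulVec (EuclideanSpace.single j 1)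
  simpa [EuclideanSpace.norm_eq, Matrix.mulVec_single_one] using h

theorem sqrt_sum_sq_norm_row_le_l2_opNorm [DecidableEq n] (A : Matrix m n 𝕜) (i : m) :
    √(∑ j, ‖A i j‖ ^ 2) ≤ ‖A‖ := by
  classical
  simpa [← l2_opNorm_conjTranspose A] using sqrt_sum_sq_norm_col_le_l2_opNorm Aᴴ i

theorem sum_norm_mul_norm_le_l2_opNorm_mul [DecidableEq m] [DecidableEq n] (A : Matrix l m 𝕜)
    (B : Matrix m n 𝕜) (i : l) (k : n) : ∑ j, ‖A i j‖ * ‖B j k‖ ≤ ‖A‖ * ‖B‖ :=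
  (Real.sum_mul_le_sqrt_mul_sqrt _ _ _).trans <|
    mul_le_mul (sqrt_sum_sq_norm_row_le_l2_opNorm A i) (sqrt_sum_sq_norm_col_le_l2_opNorm B k)
      (Real.sqrt_nonneg _) (norm_nonneg _)

variable {ι : Type*} {β : ι → Type*} [∀ n, Fintype (β n)] [∀ n, DecidableEq (β n)]
  [DecidableEq m] (A : Matrix l (Σ n, β n) 𝕜) (B : Matrix (Σ n, β n) m 𝕜)

theorem summable_norm_mul_of_summable_l2_opNorm_submatrix
    (h : Summable fun n => ‖A.submatrix id (Sigma.mk n)‖ * ‖B.submatrix (Sigma.mk n) id‖)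
    (i : l) (k : m) : Summable fun b => ‖A i b * B b k‖ := by
  refine (summable_sigma_of_nonneg fun _ => norm_nonneg _).2
    ⟨fun _ => .of_finite, h.of_nonneg_of_le (fun _ => tsum_nonneg fun _ => norm_nonneg _) ?_⟩
  intro n
  simpa [tsum_fintype, norm_mul] using
    sum_norm_mul_norm_le_l2_opNorm_mul (A.submatrix id (Sigma.mk n))
      (B.submatrix (Sigma.mk n) id) i k

theorem of_tsum_mul_eq_tsum_submatrix_mul
    (h : Summable fun n => ‖A.submatrix id (Sigma.mk n)‖ * ‖B.submatrix (Sigma.mk n) id‖) :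
    of (fun i k => ∑' b, A i b * B b k) =
      ∑' n, A.submatrix id (Sigma.mk n) * B.submatrix (Sigma.mk n) id := by
  have hs : Summable fun n => A.submatrix id (Sigma.mk n) * B.submatrix (Sigma.mk n) id :=
    .of_norm_bounded h fun n => l2_opNorm_mul _ _
  ext i k
  have hentry := Pi.hasSum.1 (Pi.hasSum.1 hs.hasSum i) k
  rw [← hentry.tsum_eq, of_apply,
    (summable_norm_mul_of_summable_l2_opNorm_submatrix A B h i k).of_norm.tsum_sigma]
  simp [tsum_fintype, mul_apply]

theorem l2_opNorm_of_tsum_mul_le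
    (h : Summable fun n => ‖A.submatrix id (Sigma.mk n)‖ * ‖B.submatrix (Sigma.mk n) id‖) :
    ‖of fun i k => ∑' b, A i b * B b k‖ ≤
      ∑' n, ‖A.submatrix id (Sigma.mk n)‖ * ‖B.submatrix (Sigma.mk n) id‖ := by
  rw [of_tsum_mul_eq_tsum_submatrix_mul A B h]
  exact tsum_of_norm_bounded h.hasSum fun n => l2_opNorm_mul _ _

end Matrix

theorem Real.summable_inv_mul_one_add_log_rpow {p : ℝ} (hp : 1 < p) :
    Summable fun n : ℕ => ((n : ℝ) * (1 + Real.log n) ^ p)⁻¹ := by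
  have hlog := Real.log_natCast_nonneg
  rw [← summable_condensed_iff_of_nonneg (fun n => by have := hlog n; positivity)
    fun m n hm hmn => ?_]
  -- Cauchy condensation turns the series into `∑ₖ (1 + k log 2)^{-p}`.
  · have hl2 : 0 < Real.log 2 := Real.log_pos one_lt_two
    have hshift : Summable fun k : ℕ => (((k : ℝ) + 1) ^ p)⁻¹ := by
      simpa using (summable_nat_add_iff 1).2 (Real.summable_nat_rpow_inv.2 hp)
    refine (hshift.mul_left (Real.log 2 ^ p)⁻¹).of_nonneg_of_le
      (fun k => by have := hlog (2 ^ k); positivity) fun k => ?_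
    have hk : Real.log 2 * (k + 1) ≤ 1 + Real.log ((2 ^ k : ℕ) : ℝ) := by
      push_cast
      rw [Real.log_pow]
      nlinarith [Real.log_two_lt_d9, (k.cast_nonneg : (0 : ℝ) ≤ k)]
    calc (2 : ℝ) ^ k * (((2 ^ k : ℕ) : ℝ) * (1 + Real.log ((2 ^ k : ℕ) : ℝ)) ^ p)⁻¹
        = ((1 + Real.log ((2 ^ k : ℕ) : ℝ)) ^ p)⁻¹ := by
          push_cast
          field_simp
      _ ≤ ((Real.log 2 * (k + 1)) ^ p)⁻¹ := by gcongr
      _ = (Real.log 2 ^ p)⁻¹ * (((k : ℝ) + 1) ^ p)⁻¹ := by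
          rw [Real.mul_rpow hl2.le (by positivity), mul_inv]
  · have hm' : (0 : ℝ) < m := Nat.cast_pos.2 hm
    have hmn' : (m : ℝ) ≤ n := Nat.cast_le.2 hmn
    have := hlog m
    gcongr

theorem Real.log_natCast_le_log_natCast {a b : ℕ} (hab : a ≤ b) :
    Real.log a ≤ Real.log b := by
  rcases a.eq_zero_or_pos with rfl | ha
  · simpa using Real.log_natCast_nonneg b
  · exact Real.log_le_log (Nat.cast_pos.2 ha) (Nat.cast_le.2 hab)

noncomputable def logWeight (d n : ℕ) : ℝ := 1 + Real.log ((d : ℝ) + 2 * n)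

-- `logKernel d (2β) k' n` is the ratio of the weight of `(AB)_{[k]}^{[k']}` to the product of the
-- weights of `A_{[k]}^{[n]}` and `B_{[n]}^{[k']}` (`wtBeta_mul_wtBetaPlus_mul_logKernel`).
noncomputable def logKernel (d : ℕ) (p : ℝ) (m n : ℕ) : ℝ :=
  (logWeight d n ^ p * (1 + 2 * |(n : ℝ) - m|))⁻¹

theorem logWeight_eq (d n : ℕ) : logWeight d n = 1 + Real.log ((d + 2 * n : ℕ) : ℝ) := by
  simp [logWeight]

theorem one_add_log_le_logWeight {d x : ℕ} (n : ℕ) (h : x ≤ d + 2 * n) :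
    1 + Real.log x ≤ logWeight d n := by
  rw [logWeight_eq]
  linarith [show Real.log x ≤ Real.log ((d + 2 * n : ℕ) : ℝ) from
    Real.log_natCast_le_log_natCast h]

theorem one_le_logWeight (d n : ℕ) : 1 ≤ logWeight d n := by
  simpa using one_add_log_le_logWeight (d := d) (x := 0) n (Nat.zero_le _)

theorem logWeight_pos (d n : ℕ) : 0 < logWeight d n := one_pos.trans_le (one_le_logWeight d n)

theorem one_sub_log_two_mul_logWeight_le {d m n : ℕ} (h : m < 2 * n) :
    (1 - Real.log 2) * logWeight d m ≤ logWeight d n := by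
  have hlog :
      Real.log ((d + 2 * m : ℕ) : ℝ) ≤ Real.log 2 + Real.log ((d + 2 * n : ℕ) : ℝ) := by
    have h2 := Real.log_natCast_le_log_natCast (show d + 2 * m ≤ 2 * (d + 2 * n) by omega)
    rwa [Nat.cast_mul, Nat.cast_ofNat, Real.log_mul two_ne_zero (by norm_cast; omega)] at h2
  have hm := Real.log_natCast_nonneg (d + 2 * m)
  have hl2 := Real.log_pos one_lt_two
  simp only [logWeight_eq]
  nlinarith [mul_nonneg hl2.le hm]

theorem logKernel_nonneg (d : ℕ) (p : ℝ) (m n : ℕ) : 0 ≤ logKernel d p m n := by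
  have := logWeight_pos d n
  unfold logKernel
  positivity

theorem logKernel_le_of_far {d : ℕ} {p : ℝ} (hd : 1 ≤ d) (hp : 0 ≤ p) {m n : ℕ}
    (h : 2 * n ≤ m ∨ 2 * m ≤ n) :
    logKernel d p m n ≤ (((n + 1 : ℕ) : ℝ) * (1 + Real.log ((n + 1 : ℕ) : ℝ)) ^ p)⁻¹ := by
  have hn : (n : ℝ) ≤ 2 * |(n : ℝ) - m| := by
    rcases h with h | h <;>
    · have h' := (Nat.cast_le (α := ℝ)).2 h
      push_cast at h'
      linarith [le_abs_self ((n : ℝ) - m), neg_le_abs ((n : ℝ) - m)]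
  have hw := one_add_log_le_logWeight (d := d) n (x := n + 1) (by omega)
  have := Real.log_natCast_nonneg (n + 1)
  have := logWeight_pos d n
  rw [logKernel, mul_comm ((n + 1 : ℕ) : ℝ)]
  gcongr
  push_cast
  linarith

theorem logKernel_le_of_near {d : ℕ} {p : ℝ} (hp : 0 ≤ p) {m n : ℕ} (h : m < 2 * n) :
    logKernel d p m n ≤
      ((1 - Real.log 2) ^ p)⁻¹ * (logWeight d m ^ p)⁻¹ * (1 + 2 * |(n : ℝ) - m|)⁻¹ := by
  have hl2 : 0 < 1 - Real.log 2 := by linarith [Real.log_two_lt_d9]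
  have := logWeight_pos d m
  rw [← mul_inv, ← mul_inv, ← Real.mul_rpow hl2.le this.le, logKernel]
  gcongr
  exact one_sub_log_two_mul_logWeight_le h

theorem sum_range_two_mul_inv_one_add_two_mul_abs_sub_le (m : ℕ) :
    ∑ n ∈ Finset.range (2 * m), (1 + 2 * |(n : ℝ) - m|)⁻¹ ≤ 2 * (1 + Real.log m) := by
  have hharm : ∑ j ∈ Finset.range m, ((j : ℝ) + 1)⁻¹ ≤ 1 + Real.log m := by
    simpa [harmonic] using harmonic_le_one_add_log m
  rw [two_mul m, Finset.sum_range_add, ← Finset.sum_range_reflect, ← Finset.sum_add_distrib]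
  calc _ ≤ ∑ j ∈ Finset.range m, 2 * ((j : ℝ) + 1)⁻¹ := Finset.sum_le_sum fun j hj => ?_
    _ ≤ _ := by rw [← Finset.mul_sum]; linarith
  have hj := Finset.mem_range.1 hj
  have hlow : ((m - 1 - j : ℕ) : ℝ) - m = -(j + 1) := by
    rw [Nat.sub_sub, Nat.cast_sub (by omega)]
    push_cast
    ring
  have hhigh : ((m + j : ℕ) : ℝ) - m = j := by push_cast; ring
  rw [hlow, hhigh, abs_neg, abs_of_nonneg (by positivity), abs_of_nonneg (by positivity)]
  have hj0 : (0 : ℝ) ≤ j := j.cast_nonneg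
  have hlow' : (1 + 2 * ((j : ℝ) + 1))⁻¹ ≤ ((j : ℝ) + 1)⁻¹ :=
    inv_anti₀ (by positivity) (by linarith)
  have hhigh' : (1 + 2 * (j : ℝ))⁻¹ ≤ ((j : ℝ) + 1)⁻¹ := inv_anti₀ (by positivity) (by linarith)
  linarith

theorem exists_forall_tsum_logKernel_le {d : ℕ} (hd : 1 ≤ d) {p : ℝ} (hp : 1 < p) :
    ∃ C > 0, ∀ m, Summable (logKernel d p m) ∧ ∑' n, logKernel d p m n ≤ C := by
  set F : ℕ → ℝ := fun n => (((n + 1 : ℕ) : ℝ) * (1 + Real.log ((n + 1 : ℕ) : ℝ)) ^ p)⁻¹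
  have hF : Summable F := (summable_nat_add_iff 1).2 (Real.summable_inv_mul_one_add_log_rpow hp)
  have hF0 : ∀ n, 0 ≤ F n := fun n => by have := Real.log_natCast_nonneg (n + 1); positivity
  have hp0 : 0 ≤ p := by linarith
  set c : ℝ := ((1 - Real.log 2) ^ p)⁻¹
  have hc : 0 < c := by
    have : 0 < 1 - Real.log 2 := by linarith [Real.log_two_lt_d9]
    positivity
  refine ⟨∑' n, F n + 2 * c, add_pos_of_nonneg_of_pos (tsum_nonneg hF0) (by positivity),
    fun m => ?_⟩
  have hwm := logWeight_pos d m
  -- `F` dominates the kernel off the window `m < 2n, n < 2m`, `G` inside it.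
  set G : ℕ → ℝ := fun n =>
    if n < 2 * m then c * (logWeight d m ^ p)⁻¹ * (1 + 2 * |(n : ℝ) - m|)⁻¹ else 0
  have hG0 : ∀ n ∉ Finset.range (2 * m), G n = 0 := fun n hn => if_neg (by simpa using hn)
  have hG : Summable G := summable_of_ne_finset_zero hG0
  have hle : ∀ n, logKernel d p m n ≤ F n + G n := by
    intro n
    by_cases hnear : n < 2 * m ∧ m < 2 * n
    · have hGn : G n = c * (logWeight d m ^ p)⁻¹ * (1 + 2 * |(n : ℝ) - m|)⁻¹ :=
        if_pos hnear.1
      linarith [logKernel_le_of_near (d := d) hp0 hnear.2, hF0 n]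
    · have hGn : 0 ≤ G n := by
        simp only [G]
        split_ifs <;> positivity
      linarith [logKernel_le_of_far hd hp0 (m := m) (n := n) (by omega)]
  have hsum : Summable (logKernel d p m) :=
    (hF.add hG).of_nonneg_of_le (logKernel_nonneg d p m) hle
  have hGle : ∑' n, G n ≤ 2 * c := by
    rw [tsum_eq_sum hG0, Finset.sum_congr rfl fun n hn => if_pos (Finset.mem_range.1 hn),
      ← Finset.mul_sum]
    have hlog := one_add_log_le_logWeight (d := d) m (x := m) (by omega)
    have hpow : logWeight d m ≤ logWeight d m ^ p :=
      Real.self_le_rpow_of_one_le (one_le_logWeight d m) hp.le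
    calc c * (logWeight d m ^ p)⁻¹ * ∑ n ∈ Finset.range (2 * m), (1 + 2 * |(n : ℝ) - m|)⁻¹
        ≤ c * (logWeight d m ^ p)⁻¹ * (2 * logWeight d m ^ p) := by
          gcongr
          linarith [sum_range_two_mul_inv_one_add_two_mul_abs_sub_le m]
      _ = 2 * c := by field_simp
  refine ⟨hsum, ?_⟩
  calc ∑' n, logKernel d p m n ≤ ∑' n, (F n + G n) := hsum.tsum_le_tsum hle (hF.add hG)
    _ = ∑' n, F n + ∑' n, G n := hF.tsum_add hG
    _ ≤ ∑' n, F n + 2 * c := by linarith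

theorem wtBeta_eq (d : ℕ) (β : ℝ) (k k' : ℕ) :
    wtBeta d β k k' = logWeight d k ^ β * logWeight d k' ^ β := rfl

theorem wtBeta_pos (d : ℕ) (β : ℝ) (k k' : ℕ) : 0 < wtBeta d β k k' := by
  have := logWeight_pos d k
  have := logWeight_pos d k'
  rw [wtBeta_eq]
  positivity

theorem wtBetaPlus_pos (d : ℕ) (β : ℝ) (k k' : ℕ) : 0 < wtBetaPlus d β k k' := by
  have := wtBeta_pos d β k k'
  unfold wtBetaPlus
  positivity

theorem abs_add_two_mul_sub_add_two_mul (d k k' : ℕ) :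
    |((d : ℝ) + 2 * k) - ((d : ℝ) + 2 * k')| = 2 * |(k : ℝ) - k'| := by
  rw [show ((d : ℝ) + 2 * k) - ((d : ℝ) + 2 * k') = 2 * ((k : ℝ) - k') by ring, abs_mul, abs_two]

theorem wtBeta_mul_wtBetaPlus_mul_logKernel (d : ℕ) (β : ℝ) (k n k' : ℕ) :
    wtBeta d β k n * wtBetaPlus d β n k' * logKernel d (β + β) k' n = wtBeta d β k k' := by
  have := logWeight_pos d n
  simp only [wtBetaPlus, wtBeta_eq, logKernel, Real.rpow_add this,
    abs_add_two_mul_sub_add_two_mul]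
  field_simp

theorem wtBetaPlus_mul_wtBeta_mul_logKernel (d : ℕ) (β : ℝ) (k n k' : ℕ) :
    wtBetaPlus d β k n * wtBeta d β n k' * logKernel d (β + β) k n = wtBeta d β k k' := by
  have := logWeight_pos d n
  simp only [wtBetaPlus, wtBeta_eq, logKernel, Real.rpow_add this,
    abs_add_two_mul_sub_add_two_mul, abs_sub_comm (k : ℝ)]
  field_simp

theorem mul_mul_le_of_mul_le_of_mul_le {w₁ w₂ K a b M₁ M₂ : ℝ} (hK : 0 ≤ K) (ha : 0 ≤ a)
    (hb : 0 ≤ b) (hw₁ : 0 ≤ w₁) (hw₂ : 0 ≤ w₂) (h₁ : w₁ * a ≤ M₁) (h₂ : w₂ * b ≤ M₂) :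
    w₁ * w₂ * K * (a * b) ≤ M₁ * M₂ * K :=
  calc w₁ * w₂ * K * (a * b) = (w₁ * a) * (w₂ * b) * K := by ring
    _ ≤ M₁ * M₂ * K := by gcongr; exact (mul_nonneg hw₁ ha).trans h₁

theorem blockNorm_nonneg (d : ℕ) (A : IndexE d → IndexE d → ℂ) (k k' : ℕ) :
    0 ≤ blockNorm d A k k' := norm_nonneg _

section WeightedBounds

variable {d : ℕ} {β MA MB : ℝ} {A B : IndexE d → IndexE d → ℂ}
  (hA : ∀ k k', wtBeta d β k k' * blockNorm d A k k' ≤ MA)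
  (hB : ∀ k k', wtBetaPlus d β k k' * blockNorm d B k k' ≤ MB)
include hA hB

theorem wtBeta_mul_blockNorm_mul_blockNorm_le (k n k' : ℕ) :
    wtBeta d β k k' * (blockNorm d A k n * blockNorm d B n k') ≤
      MA * MB * logKernel d (β + β) k' n := by
  simpa only [wtBeta_mul_wtBetaPlus_mul_logKernel] using
    mul_mul_le_of_mul_le_of_mul_le (logKernel_nonneg d (β + β) k' n)
      (blockNorm_nonneg _ _ _ _) (blockNorm_nonneg _ _ _ _) (wtBeta_pos d β k n).le
      (wtBetaPlus_pos d β n k').le (hA k n) (hB n k')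

theorem wtBeta_mul_blockNorm_mul_blockNorm_le' (k n k' : ℕ) :
    wtBeta d β k k' * (blockNorm d B k n * blockNorm d A n k') ≤
      MA * MB * logKernel d (β + β) k n := by
  simpa only [wtBetaPlus_mul_wtBeta_mul_logKernel, mul_comm MB] using
    mul_mul_le_of_mul_le_of_mul_le (logKernel_nonneg d (β + β) k n)
      (blockNorm_nonneg _ _ _ _) (blockNorm_nonneg _ _ _ _) (wtBetaPlus_pos d β k n).le
      (wtBeta_pos d β n k').le (hB k n) (hA n k')

end WeightedBounds

theorem summable_and_mul_blockNorm_tsum_mul_le {d : ℕ} {A B : IndexE d → IndexE d → ℂ}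
    {k k' : ℕ} {w M C : ℝ} {K : ℕ → ℝ} (hw : 0 < w) (hM : 0 ≤ M) (hK : Summable K)
    (hKC : ∑' n, K n ≤ C) (h : ∀ n, w * (blockNorm d A k n * blockNorm d B n k') ≤ M * K n) :
    (∀ i i', Summable fun b => ‖A ⟨k, i⟩ b * B b ⟨k', i'⟩‖) ∧
      w * blockNorm d (fun a c => ∑' b, A a b * B b c) k k' ≤ C * M := by
  let A' : Matrix (Fin (hermiteDim d (d + 2 * k))) (IndexE d) ℂ :=
    Matrix.of fun i b => A ⟨k, i⟩ b
  let B' : Matrix (IndexE d) (Fin (hermiteDim d (d + 2 * k'))) ℂ :=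
    Matrix.of fun b i' => B b ⟨k', i'⟩
  have hu : Summable fun n => blockNorm d A k n * blockNorm d B n k' :=
    ((hK.mul_left M).div_const w).of_nonneg_of_le
      (fun n => mul_nonneg (blockNorm_nonneg _ _ _ _) (blockNorm_nonneg _ _ _ _))
      fun n => (le_div_iff₀' hw).2 (h n)
  refine ⟨Matrix.summable_norm_mul_of_summable_l2_opNorm_submatrix A' B' hu, ?_⟩
  calc w * blockNorm d (fun a c => ∑' b, A a b * B b c) k k'
      ≤ w * ∑' n, blockNorm d A k n * blockNorm d B n k' :=
        mul_le_mul_of_nonneg_left (Matrix.l2_opNorm_of_tsum_mul_le A' B' hu) hw.le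
    _ = ∑' n, w * (blockNorm d A k n * blockNorm d B n k') := tsum_mul_left.symm
    _ ≤ ∑' n, M * K n := (hu.mul_left w).tsum_le_tsum h (hK.mul_left M)
    _ = M * ∑' n, K n := tsum_mul_left
    _ ≤ C * M := by rw [mul_comm C]; exact mul_le_mul_of_nonneg_left hKC hM

theorem stmt5 (d : ℕ) (hd : 1 ≤ d) (β : ℝ) (hβ : 1 / 2 < β) :
    ∃ C > 0, ∀ (A B : IndexE d → IndexE d → ℂ) (MA MB : ℝ),
      (∀ k k', wtBeta d β k k' * blockNorm d A k k' ≤ MA) →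
      (∀ k k', wtBetaPlus d β k k' * blockNorm d B k k' ≤ MB) →
      (∀ a c : IndexE d, Summable (fun b : IndexE d => ‖A a b * B b c‖)) ∧
      (∀ a c : IndexE d, Summable (fun b : IndexE d => ‖B a b * A b c‖)) ∧
      (∀ k k', wtBeta d β k k' *
        blockNorm d (fun a c => ∑' b : IndexE d, A a b * B b c) k k' ≤ C * MA * MB) ∧
      (∀ k k', wtBeta d β k k' *
        blockNorm d (fun a c => ∑' b : IndexE d, B a b * A b c) k k' ≤ C * MA * MB) := by
  obtain ⟨C, hC, hK⟩ := exists_forall_tsum_logKernel_le hd (p := β + β) (by linarith)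
  refine ⟨C, hC, fun A B MA MB hA hB => ?_⟩
  have hM : 0 ≤ MA * MB := mul_nonneg
    ((mul_nonneg (wtBeta_pos d β 0 0).le (blockNorm_nonneg _ _ _ _)).trans (hA 0 0))
    ((mul_nonneg (wtBetaPlus_pos d β 0 0).le (blockNorm_nonneg _ _ _ _)).trans (hB 0 0))
  have hAB k k' := summable_and_mul_blockNorm_tsum_mul_le (wtBeta_pos d β k k') hM
    (hK k').1 (hK k').2 (wtBeta_mul_blockNorm_mul_blockNorm_le hA hB k · k')
  have hBA k k' := summable_and_mul_blockNorm_tsum_mul_le (wtBeta_pos d β k k') hM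
    (hK k).1 (hK k).2 (wtBeta_mul_blockNorm_mul_blockNorm_le' hA hB k · k')
  refine ⟨fun ⟨k, i⟩ ⟨k', i'⟩ => (hAB k k').1 i i', fun ⟨k, i⟩ ⟨k', i'⟩ => (hBA k k').1 i i',
    fun k k' => ?_, fun k k' => ?_⟩
  · rw [mul_assoc]
    exact (hAB k k').2
  · rw [mul_assoc]
    exact (hBA k k').2
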